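/- In the three-step world with u ≠ 0, S₀ > 0 and K ≠ 0, there is NO choice of real hedge weights (ω, w₁¹, w₂⁰, w₂¹, w₂², w₃^{−1}, w₃⁰, w₃¹, w₃², w₃³) such that, identically in the eight local-volatility variables, ∂Λ'(0)/∂α₂^j = 0 for all j ∈ {−1,0,1} and ∂Λ'(1)/∂α₂^j = ∂Λ'(−1)/∂α₂^j for all j ∈ {−2,−1,0,1,2}. Hence the tractor option on the path (0,0,0) cannot be hedged to second order against local-volatility movements using only the stock and European (Arrow-Debreu) options: vanilla options do not complete the market in the stochastic local volatility model. -/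

import Mathlib

/-- Three-step world, short `K` units of the tractor paying 1 only on the path
`(0,0,0)`: value of the hedged portfolio after one step to node `(1,j)`, before
re-hedging, as an explicit polynomial in the eight future local volatility
parameters `α₁⁻¹, α₁⁰, α₁¹, α₂⁻², α₂⁻¹, α₂⁰, α₂¹, α₂²`
(`= a1m1, a10, a11, a2m2, a2m1, a20, a21, a22`). The hedge consists of `ω`
stock, `w11` units of `A₁¹`, `w2i` units of `A₂ⁱ` and `w3i` units of `A₃ⁱ`. -/
noncomputable def threeStepPortfolio (u S₀ K ω w11 w20 w21 w22 w3m1 w30 w31 w32 w33 : ℝ)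
    (j : ℤ) (a1m1 a10 a11 a2m2 a2m1 a20 a21 a22 : ℝ) : ℝ :=
  let cu : ℝ := 1 + Real.exp u
  let cd : ℝ := 1 + Real.exp (-u)
  if j = 1 then
    (w11 + a11 / cd * w20 + (1 - a11) * w21 + a11 / cu * w22
      + a11 * a20 / cd ^ 2 * w3m1
      + (a11 * (1 - a20) + (1 - a11) * a21) / cd * w30
      + (a11 * (a22 + a20) / (cu * cd) + (1 - a11) * (1 - a21)) * w31
      + (a11 * (1 - a22) + (1 - a11) * a21) / cu * w32
      + a11 * a22 / cu ^ 2 * w33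
      + Real.exp u * ω * S₀)
  else if j = 0 then
    ((1 - a10) * w20 + a10 / cu * w21
      + (a10 * (1 - a2m1) + (1 - a10) * a20) / cd * w3m1
      + (a10 * (a21 + a2m1) / (cu * cd) + (1 - a10) * (1 - a20)) * w30
      + (a10 * (1 - a21) + (1 - a10) * a20) / cu * w31
      + a10 * a21 / cu ^ 2 * w32
      + ω * S₀ - K * (1 - a10) * (1 - a20))
  else
    (a1m1 / cu * w20
      + (a1m1 * (a20 + a2m2) / (cu * cd) + (1 - a1m1) * (1 - a2m1)) * w3m1
      + (a1m1 * (1 - a20) + (1 - a1m1) * a2m1) / cu * w30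
      + a1m1 * a20 / cu ^ 2 * w31
      + Real.exp (-u) * ω * S₀)

lemma deriv_affine (c b x : ℝ) : deriv (fun y : ℝ => c * y + b) x = c := by
  have h : HasDerivAt (fun y : ℝ => c * y + b) c x := by
    simpa using ((hasDerivAt_id x).const_mul c).add_const b
  exact h.deriv

/-- In the three-step world with `K ≠ 0`, NO choice of hedge weights makes the
portfolio hedged to second order against local-volatility movements: there are
no weights such that, identically in the eight local-volatility variables,
`∂Λ'(0)/∂α₂ʲ = 0` for all `j ∈ {−1,0,1}` and `∂Λ'(1)/∂α₂ʲ = ∂Λ'(−1)/∂α₂ʲ` for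
all `j ∈ {−2,−1,0,1,2}`. The tractor on the path `(0,0,0)` cannot be hedged
with the stock and European (Arrow-Debreu) options alone: vanilla options do
not complete the market in the stochastic local volatility model. -/
theorem threeStep_no_second_order_hedge (u S₀ K : ℝ) (hu : u ≠ 0) (hS₀ : 0 < S₀)
    (hK : K ≠ 0) :
    ¬ ∃ ω w11 w20 w21 w22 w3m1 w30 w31 w32 w33 : ℝ,
      ∀ a1m1 a10 a11 a2m2 a2m1 a20 a21 a22 : ℝ,
        letI L : ℤ → ℝ → ℝ → ℝ → ℝ → ℝ → ℝ → ℝ → ℝ → ℝ :=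
          threeStepPortfolio u S₀ K ω w11 w20 w21 w22 w3m1 w30 w31 w32 w33
        (deriv (fun x => L 0 a1m1 a10 a11 a2m2 x a20 a21 a22) a2m1 = 0) ∧
        (deriv (fun x => L 0 a1m1 a10 a11 a2m2 a2m1 x a21 a22) a20 = 0) ∧
        (deriv (fun x => L 0 a1m1 a10 a11 a2m2 a2m1 a20 x a22) a21 = 0) ∧
        (deriv (fun x => L 1 a1m1 a10 a11 x a2m1 a20 a21 a22) a2m2 =
          deriv (fun x => L (-1) a1m1 a10 a11 x a2m1 a20 a21 a22) a2m2) ∧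
        (deriv (fun x => L 1 a1m1 a10 a11 a2m2 x a20 a21 a22) a2m1 =
          deriv (fun x => L (-1) a1m1 a10 a11 a2m2 x a20 a21 a22) a2m1) ∧
        (deriv (fun x => L 1 a1m1 a10 a11 a2m2 a2m1 x a21 a22) a20 =
          deriv (fun x => L (-1) a1m1 a10 a11 a2m2 a2m1 x a21 a22) a20) ∧
        (deriv (fun x => L 1 a1m1 a10 a11 a2m2 a2m1 a20 x a22) a21 =
          deriv (fun x => L (-1) a1m1 a10 a11 a2m2 a2m1 a20 x a22) a21) ∧
        (deriv (fun x => L 1 a1m1 a10 a11 a2m2 a2m1 a20 a21 x) a22 =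
          deriv (fun x => L (-1) a1m1 a10 a11 a2m2 a2m1 a20 a21 x) a22) := by
  rintro ⟨ω, w11, w20, w21, w22, w3m1, w30, w31, w32, w33, h⟩
  have hcu : (1 : ℝ) + Real.exp u ≠ 0 := by positivity
  have hcd : (1 : ℝ) + Real.exp (-u) ≠ 0 := by positivity
  set P := threeStepPortfolio u S₀ K ω w11 w20 w21 w22 w3m1 w30 w31 w32 w33 with hP
  -- constant lemmas for j = 1 branch (does not depend on a2m2, a2m1)
  have hL1m2 : deriv (fun x : ℝ => P 1 1 0 0 x 0 0 0 0) 0 = 0 := by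
    rw [show (fun x : ℝ => P 1 1 0 0 x 0 0 0 0) = fun _ => P 1 1 0 0 0 0 0 0 0 from rfl]
    exact deriv_const _ _
  have hL1m1 : deriv (fun x : ℝ => P 1 0 0 0 0 x 0 0 0) 0 = 0 := by
    rw [show (fun x : ℝ => P 1 0 0 0 0 x 0 0 0) = fun _ => P 1 0 0 0 0 0 0 0 0 from rfl]
    exact deriv_const _ _
  -- step 1 : w3m1 = 0, from condition 4 at a1m1 = 1
  have h4 := (h 1 0 0 0 0 0 0 0).2.2.2.1
  have e4 : (fun x : ℝ => P (-1) 1 0 0 x 0 0 0 0) =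
      fun x => (w3m1 / ((1 + Real.exp u) * (1 + Real.exp (-u)))) * x +
        (1 / (1 + Real.exp u) * w20 + 1 / (1 + Real.exp u) * w30 + Real.exp (-u) * ω * S₀) := by
    funext x
    simp only [hP, threeStepPortfolio]
    norm_num
    ring
  rw [hL1m2, e4, deriv_affine] at h4
  have hw3m1 : w3m1 = 0 := by
    field_simp at h4
    linarith
  -- step 2 : w30 = 0, from condition 5 at a1m1 = 0
  have h5 := (h 0 0 0 0 0 0 0 0).2.2.2.2.1
  have e5 : (fun x : ℝ => P (-1) 0 0 0 0 x 0 0 0) =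
      fun x => (1 / (1 + Real.exp u) * w30 - w3m1) * x + (w3m1 + Real.exp (-u) * ω * S₀) := by
    funext x
    simp only [hP, threeStepPortfolio]
    norm_num
    ring
  rw [hL1m1, e5, deriv_affine] at h5
  have hw30 : w30 = 0 := by
    rw [hw3m1] at h5
    field_simp at h5
    linarith
  -- step 3 : w31 = 0, from condition 6 at a1m1 = 0, a11 = 1
  have h6 := (h 0 0 1 0 0 0 0 0).2.2.2.2.2.1
  have e6L : (fun x : ℝ => P 1 0 0 1 0 0 x 0 0) =
      fun x => (w3m1 / (1 + Real.exp (-u)) ^ 2 - w30 / (1 + Real.exp (-u))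
          + w31 / ((1 + Real.exp u) * (1 + Real.exp (-u)))) * x +
        (w11 + w20 / (1 + Real.exp (-u)) + w22 / (1 + Real.exp u)
          + w30 / (1 + Real.exp (-u)) + w32 / (1 + Real.exp u) + Real.exp u * ω * S₀) := by
    funext x
    simp only [hP, threeStepPortfolio]
    norm_num
    ring
  have e6R : (fun x : ℝ => P (-1) 0 0 1 0 0 x 0 0) =
      fun _ : ℝ => w3m1 + Real.exp (-u) * ω * S₀ := by
    funext x
    simp only [hP, threeStepPortfolio]
    norm_num
  rw [e6L, e6R, deriv_affine, deriv_const] at h6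
  have hw31 : w31 = 0 := by
    rw [hw3m1, hw30] at h6
    field_simp at h6
    have h6' : (1 + Real.exp (-u)) * w31 = 0 := by linarith
    exact (mul_eq_zero.mp h6').resolve_left hcd
  -- step 4 : K = 0, from condition 2 at a10 = 0
  have h2 := (h 0 0 0 0 0 0 0 0).2.1
  have e2 : (fun x : ℝ => P 0 0 0 0 0 0 x 0 0) =
      fun x => (w3m1 / (1 + Real.exp (-u)) - w30 + w31 / (1 + Real.exp u) + K) * x +
        (w20 + w30 + ω * S₀ - K) := by
    funext x
    simp only [hP, threeStepPortfolio]
    norm_num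
    ring
  rw [e2, deriv_affine] at h2
  rw [hw3m1, hw30, hw31] at h2
  apply hK
  field_simp at h2
  have h2' : (1 + Real.exp (-u)) * (1 + Real.exp u) * K = 0 := by linarith
  exact (mul_eq_zero.mp h2').resolve_left (mul_ne_zero hcd hcu)
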